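/- arXiv:2002.09742 — 2 statements merged into one kernel-verified Lean document; each statement's English description precedes it below -/
import Mathlib

section
/- Let d be a positive integer, α ∈ (0,2), β > 0, s ≥ 0, and let μ be a nonzero finite Borel measure on ℝ^d with closed support S. Then there is a constant C > 0, depending only on α and d, such that for every k > 0, every t > 0 and every x ∈ ℝ^d, h_k(t,x) ≤ C · k · μ(ℝ^d) · max(t^{-1/β − s/α}, t^{-1/β}) · W(t^{-1/α} d(x,S)). -/
open MeasureTheory Metric Set Filter Topology

/-- The profile function `W(r) = log(e + r²)/(1 + r^{d+α})`. -/
noncomputable def Wfn (d : ℕ) (α r : ℝ) : ℝ :=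
  Real.log (Real.exp 1 + r ^ 2) / (1 + r ^ ((d : ℝ) + α))

/-- `w_t(x) = t^{-1/β}(1 + t^{-s/α}) W(t^{-1/α}|x|)`. -/
noncomputable def wfn (d : ℕ) (α β s t : ℝ) (x : EuclideanSpace ℝ (Fin d)) : ℝ :=
  t ^ (-(1:ℝ)/β) * (1 + t ^ (-s/α)) * Wfn d α (t ^ (-(1:ℝ)/α) * ‖x‖)

/-- `h_k(t,x) = k ∫ w_t(x - y) dμ(y)`. -/
noncomputable def hfn (d : ℕ) (α β s : ℝ) (μ : Measure (EuclideanSpace ℝ (Fin d)))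
    (k t : ℝ) (x : EuclideanSpace ℝ (Fin d)) : ℝ :=
  k * ∫ y, wfn d α β s t (x - y) ∂μ

/-- `S` is the closed support of `μ`. -/
def IsSupportOf (d : ℕ) (μ : Measure (EuclideanSpace ℝ (Fin d)))
    (S : Set (EuclideanSpace ℝ (Fin d))) : Prop :=
  IsClosed S ∧ μ Sᶜ = 0 ∧ ∀ x ∈ S, ∀ r : ℝ, 0 < r → 0 < μ (ball x r)

/-- Condition (F2)-s with constant `Cund` on the set `S`. -/
def IsF2 (d : ℕ) (μ : Measure (EuclideanSpace ℝ (Fin d)))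
    (S : Set (EuclideanSpace ℝ (Fin d))) (Cund s : ℝ) : Prop :=
  ∀ x ∈ S, ∀ r : ℝ, 0 < r → r ≤ 1 →
    ENNReal.ofReal (Cund * r ^ s) ≤ μ (closedBall x r)

/-! The profile `W(r) = log(e + r²)/(1 + r^p)` with `p = d + α ≥ 1` is almost decreasing:
`W(r) ≤ 6 W(r')` whenever `0 ≤ r' ≤ r`. Indeed `W ≤ 3` everywhere and `W ≥ 1/2` on `[0, 1]`,
while for `1 ≤ r' ≤ r` the logarithm grows at most linearly, `r' log(e + r²) ≤ 2 r log(e + r'²)`,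
which the power `r^p`, `p ≥ 1`, absorbs. Since `S` carries all of `μ`, every `y` that matters
satisfies `|x - y| ≥ d(x, S)`, so the integrand of `h_k` is bounded by `6 W(t^{-1/α} d(x, S))`
times its prefactor `t^{-1/β} + t^{-1/β - s/α} ≤ 2 max(…)`, and integrating gives `C = 12`. -/

namespace Real

lemma one_le_log_exp_one_add_sq (r : ℝ) : 1 ≤ log (exp 1 + r ^ 2) := by
  calc 1 = log (exp 1) := (log_exp 1).symm
    _ ≤ _ := log_le_log (exp_pos 1) (by nlinarith [sq_nonneg r])

lemma log_exp_one_add_sq_le {r : ℝ} (hr : 0 ≤ r) : log (exp 1 + r ^ 2) ≤ 1 + 2 * r := by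
  have he : (2:ℝ) ≤ exp 1 := by linarith [add_one_le_exp 1]
  have hmul : log (exp 1 + r ^ 2) ≤ log (exp 1 * (1 + r) ^ 2) :=
    log_le_log (by positivity) (by nlinarith)
  rw [log_mul (exp_pos 1).ne' (by positivity), log_exp, log_pow] at hmul
  have := log_le_sub_one_of_pos (by linarith : (0:ℝ) < 1 + r)
  push_cast at hmul
  linarith

lemma mul_log_exp_one_add_sq_le {r' r : ℝ} (hr' : 0 < r') (h : r' ≤ r) :
    r' * log (exp 1 + r ^ 2) ≤ 2 * r * log (exp 1 + r' ^ 2) := by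
  have hu : 1 ≤ r / r' := (one_le_div hr').2 h
  have hscale : exp 1 + r ^ 2 ≤ (r / r') ^ 2 * (exp 1 + r' ^ 2) := by
    have : (r / r') ^ 2 * r' ^ 2 = r ^ 2 := by field_simp
    nlinarith [exp_pos 1, one_le_pow₀ (n := 2) hu]
  have hlog : log (exp 1 + r ^ 2) ≤ 2 * (r / r' - 1) + log (exp 1 + r' ^ 2) := by
    have h2 := log_le_log (by positivity) hscale
    rw [log_mul (by positivity) (by positivity), log_pow] at h2
    have := log_le_sub_one_of_pos (by linarith : 0 < r / r')
    push_cast at h2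
    linarith
  have hdiv : r' * (r / r') = r := by field_simp
  have := one_le_log_exp_one_add_sq r'
  nlinarith

end Real

open Real

section Profile

variable {d : ℕ} {α : ℝ}

lemma Wfn_nonneg {r : ℝ} (hr : 0 ≤ r) : 0 ≤ Wfn d α r :=
  div_nonneg (zero_le_one.trans (one_le_log_exp_one_add_sq r)) (by positivity)

lemma Wfn_le_three (hp : 1 ≤ (d:ℝ) + α) {r : ℝ} (hr : 0 ≤ r) : Wfn d α r ≤ 3 := by
  have hlin : r ≤ 1 + r ^ ((d:ℝ) + α) := by
    rcases le_total r 1 with hr1 | hr1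
    · linarith [rpow_nonneg hr ((d:ℝ) + α)]
    · linarith [self_le_rpow_of_one_le hr1 hp]
  rw [Wfn, div_le_iff₀ (by positivity)]
  linarith [log_exp_one_add_sq_le hr, rpow_nonneg hr ((d:ℝ) + α)]

lemma half_le_Wfn (hp : 0 ≤ (d:ℝ) + α) {r : ℝ} (hr : 0 ≤ r) (hr1 : r ≤ 1) :
    1 / 2 ≤ Wfn d α r := by
  rw [Wfn, le_div_iff₀ (by positivity)]
  linarith [one_le_log_exp_one_add_sq r, rpow_le_one hr hr1 hp]

lemma Wfn_le_four_mul (hp : 1 ≤ (d:ℝ) + α) {r' r : ℝ} (hr' : 1 ≤ r') (h : r' ≤ r) :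
    Wfn d α r ≤ 4 * Wfn d α r' := by
  set p := (d:ℝ) + α
  have hr'0 : 0 < r' := by linarith
  have hr0 : 0 < r := by linarith
  have hpow : r * r' ^ p ≤ r' * r ^ p := by
    have hmono : r' ^ (p - 1) ≤ r ^ (p - 1) := rpow_le_rpow hr'0.le h (by linarith)
    have hr'p : r' ^ p = r' * r' ^ (p - 1) := by
      rw [← rpow_one_add' hr'0.le (by linarith)]; ring_nf
    have hrp : r ^ p = r * r ^ (p - 1) := by
      rw [← rpow_one_add' hr0.le (by linarith)]; ring_nf
    rw [hr'p, hrp]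
    nlinarith [mul_pos hr0 hr'0]
  have hr'p1 : 1 ≤ r' ^ p := one_le_rpow hr' (by linarith)
  have hlog := mul_log_exp_one_add_sq_le hr'0 h
  have hL := one_le_log_exp_one_add_sq r
  have hL' := one_le_log_exp_one_add_sq r'
  rw [Wfn, Wfn, ← mul_div_assoc, div_le_div_iff₀ (by positivity) (by positivity)]
  suffices r' * (log (exp 1 + r ^ 2) * (1 + r' ^ p)) ≤
      r' * (4 * log (exp 1 + r' ^ 2) * (1 + r ^ p)) from le_of_mul_le_mul_left this hr'0
  calc r' * (log (exp 1 + r ^ 2) * (1 + r' ^ p))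
      ≤ r' * log (exp 1 + r ^ 2) * (2 * r' ^ p) := by
        rw [← mul_assoc]; gcongr; linarith
    _ ≤ 2 * r * log (exp 1 + r' ^ 2) * (2 * r' ^ p) := by gcongr
    _ = 4 * log (exp 1 + r' ^ 2) * (r * r' ^ p) := by ring
    _ ≤ 4 * log (exp 1 + r' ^ 2) * (r' * r ^ p) := by gcongr
    _ ≤ r' * (4 * log (exp 1 + r' ^ 2) * (1 + r ^ p)) := by nlinarith

lemma Wfn_le_six_mul (hp : 1 ≤ (d:ℝ) + α) {r' r : ℝ} (hr' : 0 ≤ r') (h : r' ≤ r) :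
    Wfn d α r ≤ 6 * Wfn d α r' := by
  rcases le_total r' 1 with hr'1 | hr'1
  · linarith [Wfn_le_three hp (hr'.trans h), half_le_Wfn (d := d) (α := α) (by linarith) hr' hr'1]
  · linarith [Wfn_le_four_mul hp hr'1 h, Wfn_nonneg (d := d) (α := α) hr']

end Profile

section Kernel

variable {d : ℕ} {α β s t : ℝ}

lemma wfn_nonneg (ht : 0 < t) (x : EuclideanSpace ℝ (Fin d)) : 0 ≤ wfn d α β s t x :=
  mul_nonneg (by positivity) (Wfn_nonneg (by positivity))

lemma wfn_le_of_mem (hp : 1 ≤ (d:ℝ) + α) (ht : 0 < t) (x : EuclideanSpace ℝ (Fin d))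
    {S : Set (EuclideanSpace ℝ (Fin d))} {y : EuclideanSpace ℝ (Fin d)} (hy : y ∈ S) :
    wfn d α β s t (x - y) ≤
      12 * max (t ^ (-(1:ℝ)/β - s/α)) (t ^ (-(1:ℝ)/β)) *
        Wfn d α (t ^ (-(1:ℝ)/α) * infDist x S) := by
  have hprefactor : t ^ (-(1:ℝ)/β) * (1 + t ^ (-s/α)) ≤
      2 * max (t ^ (-(1:ℝ)/β - s/α)) (t ^ (-(1:ℝ)/β)) := by
    rw [mul_add, mul_one, ← rpow_add ht, neg_div α s, ← sub_eq_add_neg]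
    linarith [le_max_left (t ^ (-(1:ℝ)/β - s/α)) (t ^ (-(1:ℝ)/β)),
      le_max_right (t ^ (-(1:ℝ)/β - s/α)) (t ^ (-(1:ℝ)/β))]
  have hprofile : Wfn d α (t ^ (-(1:ℝ)/α) * ‖x - y‖) ≤
      6 * Wfn d α (t ^ (-(1:ℝ)/α) * infDist x S) := by
    refine Wfn_le_six_mul hp (mul_nonneg (by positivity) infDist_nonneg)
      (mul_le_mul_of_nonneg_left ?_ (by positivity))
    simpa [dist_eq_norm] using infDist_le_dist_of_mem (x := x) hy
  calc wfn d α β s t (x - y)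
      ≤ (2 * max (t ^ (-(1:ℝ)/β - s/α)) (t ^ (-(1:ℝ)/β))) *
          (6 * Wfn d α (t ^ (-(1:ℝ)/α) * infDist x S)) :=
        mul_le_mul hprefactor hprofile (Wfn_nonneg (by positivity)) (by positivity)
    _ = _ := by ring

end Kernel

theorem stmt_2_general (d : ℕ) (hd : 0 < d) (α β s : ℝ) (hα : α ∈ Ioo (0:ℝ) 2)
    (μ : Measure (EuclideanSpace ℝ (Fin d))) [IsFiniteMeasure μ]
    (S : Set (EuclideanSpace ℝ (Fin d))) (hSsupp : IsSupportOf d μ S) :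
    ∃ C > 0, ∀ k > (0:ℝ), ∀ t > (0:ℝ), ∀ x : EuclideanSpace ℝ (Fin d),
      hfn d α β s μ k t x ≤
        C * k * (μ Set.univ).toReal * max (t ^ (-(1:ℝ)/β - s/α)) (t ^ (-(1:ℝ)/β)) *
          Wfn d α (t ^ (-(1:ℝ)/α) * infDist x S) := by
  have hp : 1 ≤ (d:ℝ) + α := by
    have : (1:ℝ) ≤ d := by exact_mod_cast hd
    linarith [hα.1]
  refine ⟨12, by norm_num, fun k hk t ht x => ?_⟩
  have hbound : ∀ᵐ y ∂μ, ‖wfn d α β s t (x - y)‖ ≤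
      12 * max (t ^ (-(1:ℝ)/β - s/α)) (t ^ (-(1:ℝ)/β)) *
        Wfn d α (t ^ (-(1:ℝ)/α) * infDist x S) := by
    filter_upwards [mem_ae_iff.2 hSsupp.2.1] with y hy
    rw [Real.norm_of_nonneg (wfn_nonneg ht _)]
    exact wfn_le_of_mem hp ht x hy
  calc hfn d α β s μ k t x
      ≤ k * ((12 * max (t ^ (-(1:ℝ)/β - s/α)) (t ^ (-(1:ℝ)/β)) *
          Wfn d α (t ^ (-(1:ℝ)/α) * infDist x S)) * μ.real univ) :=
        mul_le_mul_of_nonneg_left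
          ((le_abs_self _).trans (norm_integral_le_of_norm_le_const hbound)) hk.le
    _ = _ := by rw [measureReal_def]; ring

/-- Global upper bound on `h_k` in terms of the distance to the support:
`h_k(t,x) ≤ C k μ(ℝ^d) max(t^{-1/β - s/α}, t^{-1/β}) W(t^{-1/α} d(x,S))`. -/
theorem stmt_2 (d : ℕ) (hd : 0 < d) (α β s : ℝ) (hα : α ∈ Ioo (0:ℝ) 2)
    (hβ : 0 < β) (hs : 0 ≤ s)
    (μ : Measure (EuclideanSpace ℝ (Fin d))) [IsFiniteMeasure μ] (hμ : μ ≠ 0)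
    (S : Set (EuclideanSpace ℝ (Fin d))) (hSsupp : IsSupportOf d μ S) :
    ∃ C > 0, ∀ k > (0:ℝ), ∀ t > (0:ℝ), ∀ x : EuclideanSpace ℝ (Fin d),
      hfn d α β s μ k t x ≤
        C * k * (μ Set.univ).toReal * max (t ^ (-(1:ℝ)/β - s/α)) (t ^ (-(1:ℝ)/β)) *
          Wfn d α (t ^ (-(1:ℝ)/α) * infDist x S) :=
  stmt_2_general d hd α β s hα μ S hSsupp
end

section
/- Let d be a positive integer, α ∈ (0,2), β > 0, s ∈ [0,d], and let μ be a nonzero finite Borel measure on ℝ^d with compact support S satisfying condition (F2)-s with constant C̲. Then there is a constant c₁ > 0, depending only on α and d, such that for every k > 0, every t > 0 and every x ∈ ℝ^d, h_k(t,x) ≥ C̲ · c₁ · k · t^{-1/β} · W(t^{-1/α} d(x,S)). -/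
open MeasureTheory Metric Set Filter Topology

/-!
Let `x₀` be a point of `S` nearest to `x` and `r = min(t^{1/α}, 1)`. For `y ∈ B(x₀, r) ∩ S` the
rescaled distance `t^{-1/α}|x - y|` lies between `t^{-1/α} d(x,S)` and `t^{-1/α} d(x,S) + 1`, and
on such windows `W` changes by at most the factor `2^{d+α+1}`. Integrating over `B(x₀, r) ∩ S`,
which carries the full `μ`-mass of `B(x₀, r) ≥ C̲ r^s`, the factor `1 + t^{-s/α}` compensates
`r^s`: with `u = t^{1/α}` one has `(1 + u^{-s}) min(u, 1)^s ≥ 1`.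
-/

lemma Real.add_rpow_le_two_rpow_mul_rpow_add_rpow {a b p : ℝ} (ha : 0 ≤ a) (hb : 0 ≤ b)
    (hp : 0 ≤ p) : (a + b) ^ p ≤ 2 ^ p * (a ^ p + b ^ p) := calc
  (a + b) ^ p ≤ (2 * max a b) ^ p := by
    gcongr; linarith [le_max_left a b, le_max_right a b]
  _ = 2 ^ p * max (a ^ p) (b ^ p) := by
    rw [Real.mul_rpow zero_le_two (ha.trans (le_max_left a b)), Real.rpow_max ha hb hp]
  _ ≤ 2 ^ p * (a ^ p + b ^ p) := by
    gcongr; exact max_le_add_of_nonneg (by positivity) (by positivity)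

lemma Real.one_le_one_add_rpow_neg_mul_min_rpow {u : ℝ} (hu : 0 < u) (s : ℝ) :
    1 ≤ (1 + u ^ (-s)) * min u 1 ^ s := by
  rcases le_total u 1 with h | h
  · rw [min_eq_left h, add_mul, Real.rpow_neg hu.le, inv_mul_cancel₀ (by positivity)]
    linarith [Real.rpow_nonneg hu.le s]
  · rw [min_eq_right h, Real.one_rpow, mul_one]
    linarith [Real.rpow_nonneg hu.le (-s)]

section Profile

variable {d : ℕ} {α : ℝ}

lemma one_le_log_exp_one_add_sq (r : ℝ) : 1 ≤ Real.log (Real.exp 1 + r ^ 2) := calc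
  (1 : ℝ) = Real.log (Real.exp 1) := (Real.log_exp 1).symm
  _ ≤ Real.log (Real.exp 1 + r ^ 2) :=
    Real.log_le_log (Real.exp_pos 1) (le_add_of_nonneg_right (sq_nonneg r))

lemma Wfn_pos {r : ℝ} (hr : 0 ≤ r) : 0 < Wfn d α r :=
  div_pos (one_pos.trans_le (one_le_log_exp_one_add_sq r)) (by positivity)

lemma continuousOn_Wfn (hα : 0 ≤ α) : ContinuousOn (Wfn d α) (Ici 0) := by
  have hnum : Continuous fun r : ℝ => Real.log (Real.exp 1 + r ^ 2) :=
    (continuous_const.add (continuous_pow 2)).log fun r =>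
      (by positivity : 0 < Real.exp 1 + r ^ 2).ne'
  have hden : Continuous fun r : ℝ => 1 + r ^ ((d : ℝ) + α) :=
    continuous_const.add (Real.continuous_rpow_const (by positivity))
  exact hnum.continuousOn.div hden.continuousOn fun r hr => by
    have : 0 ≤ r := hr
    positivity

lemma Wfn_le_two_rpow_mul_Wfn (hα : 0 ≤ α) {r r' : ℝ} (hr : 0 ≤ r) (h : r ≤ r')
    (h' : r' ≤ r + 1) : Wfn d α r ≤ 2 ^ ((d : ℝ) + α + 1) * Wfn d α r' := by
  set p : ℝ := (d : ℝ) + α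
  have hp : 0 ≤ p := by positivity
  have hr' : 0 ≤ r' := hr.trans h
  have hnum : Real.log (Real.exp 1 + r ^ 2) ≤ Real.log (Real.exp 1 + r' ^ 2) :=
    Real.log_le_log (by positivity) (by gcongr)
  have hden : 1 + r' ^ p ≤ 2 ^ (p + 1) * (1 + r ^ p) := by
    have h2p : 1 ≤ (2 : ℝ) ^ p := Real.one_le_rpow one_le_two hp
    have := (Real.rpow_le_rpow hr' h' hp).trans
      (Real.add_rpow_le_two_rpow_mul_rpow_add_rpow hr zero_le_one hp)
    rw [Real.one_rpow] at this
    rw [Real.rpow_add_one two_ne_zero]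
    nlinarith [Real.rpow_nonneg hr p]
  rw [Wfn, Wfn, mul_div_assoc', div_le_div_iff₀ (by positivity) (by positivity)]
  calc Real.log (Real.exp 1 + r ^ 2) * (1 + r' ^ p)
      ≤ Real.log (Real.exp 1 + r' ^ 2) * (2 ^ (p + 1) * (1 + r ^ p)) := by
        gcongr
        exact (one_pos.trans_le (one_le_log_exp_one_add_sq _)).le
    _ = _ := by ring

end Profile

section Metric

variable {X : Type*} [PseudoMetricSpace X] {d : ℕ} {α : ℝ}

lemma Wfn_mul_infDist_le {S : Set X} {x x₀ y : X} {a r : ℝ} (hα : 0 ≤ α) (ha : 0 ≤ a)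
    (har : a * r ≤ 1) (hx₀ : dist x x₀ ≤ infDist x S) (hy : y ∈ closedBall x₀ r ∩ S) :
    Wfn d α (a * infDist x S) ≤ 2 ^ ((d : ℝ) + α + 1) * Wfn d α (a * dist x y) := by
  have hlow : infDist x S ≤ dist x y := infDist_le_dist_of_mem hy.2
  have hup : dist x y ≤ infDist x S + r :=
    (dist_triangle x x₀ y).trans (add_le_add hx₀ (mem_closedBall'.1 hy.1))
  apply Wfn_le_two_rpow_mul_Wfn hα (mul_nonneg ha infDist_nonneg)
    (mul_le_mul_of_nonneg_left hlow ha)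
  nlinarith

variable [MeasurableSpace X] [OpensMeasurableSpace X] {μ : Measure X} [IsFiniteMeasure μ]

lemma Wfn_mul_infDist_mul_measureReal_le_integral {S : Set X} (hS : IsClosed S)
    (hSμ : μ Sᶜ = 0) {x x₀ : X} {a r : ℝ} (hα : 0 ≤ α) (ha : 0 ≤ a) (har : a * r ≤ 1)
    (hx₀ : dist x x₀ ≤ infDist x S) (hint : Integrable (fun y => Wfn d α (a * dist x y)) μ) :
    Wfn d α (a * infDist x S) * μ.real (closedBall x₀ r) ≤
      2 ^ ((d : ℝ) + α + 1) * ∫ y, Wfn d α (a * dist x y) ∂μ := by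
  have hint' := hint.const_mul (2 ^ ((d : ℝ) + α + 1))
  rw [← integral_const_mul, measureReal_def, ← measure_inter_conull hSμ, ← measureReal_def]
  calc Wfn d α (a * infDist x S) * μ.real (closedBall x₀ r ∩ S)
      ≤ ∫ y in closedBall x₀ r ∩ S, 2 ^ ((d : ℝ) + α + 1) * Wfn d α (a * dist x y) ∂μ :=
        setIntegral_ge_of_const_le_real (measurableSet_closedBall.inter hS.measurableSet)
          (measure_ne_top μ _) (fun y hy => Wfn_mul_infDist_le hα ha har hx₀ hy)
          hint'.integrableOn
    _ ≤ ∫ y, 2 ^ ((d : ℝ) + α + 1) * Wfn d α (a * dist x y) ∂μ :=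
        setIntegral_le_integral hint' (ae_of_all _ fun y =>
          mul_nonneg (by positivity) (Wfn_pos (mul_nonneg ha dist_nonneg)).le)

end Metric

lemma Continuous.integrable_of_isCompact_of_measure_compl_eq_zero {X E : Type*}
    [TopologicalSpace X] [T2Space X] [MeasurableSpace X] [OpensMeasurableSpace X]
    [NormedAddCommGroup E] {μ : Measure X} [IsFiniteMeasureOnCompacts μ] {S : Set X}
    (hS : IsCompact S) (hSμ : μ Sᶜ = 0) {g : X → E} (hg : Continuous g) : Integrable g μ := by
  rw [← Measure.restrict_eq_self_of_ae_mem (ae_iff.2 hSμ)]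
  exact hg.continuousOn.integrableOn_compact hS

lemma IsF2.le_one_add_rpow_neg_mul_measureReal_closedBall {d : ℕ}
    {μ : Measure (EuclideanSpace ℝ (Fin d))} [IsFiniteMeasure μ]
    {S : Set (EuclideanSpace ℝ (Fin d))} {Cund s u : ℝ} {x₀ : EuclideanSpace ℝ (Fin d)}
    (hF2 : IsF2 d μ S Cund s) (hCund : 0 ≤ Cund) (hx₀ : x₀ ∈ S) (hu : 0 < u) :
    Cund ≤ (1 + u ^ (-s)) * μ.real (closedBall x₀ (min u 1)) := by
  have hball : Cund * min u 1 ^ s ≤ μ.real (closedBall x₀ (min u 1)) :=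
    (ENNReal.ofReal_le_iff_le_toReal (measure_ne_top μ _)).1
      (hF2 x₀ hx₀ _ (lt_min hu one_pos) (min_le_right u 1))
  calc Cund ≤ Cund * ((1 + u ^ (-s)) * min u 1 ^ s) :=
        le_mul_of_one_le_right hCund (Real.one_le_one_add_rpow_neg_mul_min_rpow hu s)
    _ = (1 + u ^ (-s)) * (Cund * min u 1 ^ s) := by ring
    _ ≤ (1 + u ^ (-s)) * μ.real (closedBall x₀ (min u 1)) := by gcongr

lemma IsF2.mul_Wfn_mul_infDist_le_integral {d : ℕ} {α s Cund u : ℝ}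
    {μ : Measure (EuclideanSpace ℝ (Fin d))} [IsFiniteMeasure μ]
    {S : Set (EuclideanSpace ℝ (Fin d))} (hF2 : IsF2 d μ S Cund s) (hCund : 0 ≤ Cund)
    (hS : IsCompact S) (hSne : S.Nonempty) (hSμ : μ Sᶜ = 0) (hα : 0 ≤ α) (hu : 0 < u)
    (x : EuclideanSpace ℝ (Fin d)) :
    Cund * Wfn d α (u⁻¹ * infDist x S) ≤
      2 ^ ((d : ℝ) + α + 1) * ((1 + u ^ (-s)) * ∫ y, Wfn d α (u⁻¹ * dist x y) ∂μ) := by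
  obtain ⟨x₀, hx₀S, hxx₀⟩ := hS.exists_infDist_eq_dist hSne x
  have hcont : Continuous fun y => Wfn d α (u⁻¹ * dist x y) :=
    (continuousOn_Wfn hα).comp_continuous (continuous_const.mul (continuous_const.dist
      continuous_id)) fun y => mul_nonneg (inv_nonneg.2 hu.le) dist_nonneg
  have hlocal := Wfn_mul_infDist_mul_measureReal_le_integral hS.isClosed hSμ hα
    (inv_nonneg.2 hu.le) (inv_mul_le_one_of_le₀ (min_le_left u 1) hu.le) hxx₀.ge
    (hcont.integrable_of_isCompact_of_measure_compl_eq_zero hS hSμ)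
  have hmass := hF2.le_one_add_rpow_neg_mul_measureReal_closedBall hCund hx₀S hu
  have hW := (Wfn_pos (d := d) (α := α) (mul_nonneg (inv_nonneg.2 hu.le)
    (infDist_nonneg (x := x) (s := S)))).le
  calc Cund * Wfn d α (u⁻¹ * infDist x S)
      ≤ (1 + u ^ (-s)) * μ.real (closedBall x₀ (min u 1)) * Wfn d α (u⁻¹ * infDist x S) := by
        gcongr
    _ = (1 + u ^ (-s)) * (Wfn d α (u⁻¹ * infDist x S) * μ.real (closedBall x₀ (min u 1))) := by
        ring
    _ ≤ (1 + u ^ (-s)) * (2 ^ ((d : ℝ) + α + 1) * ∫ y, Wfn d α (u⁻¹ * dist x y) ∂μ) := by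
        gcongr
    _ = _ := by ring

lemma hfn_eq_mul_integral (d : ℕ) (α β s : ℝ) (μ : Measure (EuclideanSpace ℝ (Fin d)))
    (k t : ℝ) (x : EuclideanSpace ℝ (Fin d)) :
    hfn d α β s μ k t x = k * t ^ (-(1:ℝ)/β) * (1 + t ^ (-s/α)) *
      ∫ y, Wfn d α (t ^ (-(1:ℝ)/α) * dist x y) ∂μ := by
  simp only [hfn, wfn, dist_eq_norm, integral_const_mul]
  ring

theorem stmt_4_general (d : ℕ) (α β s : ℝ) (hα : α ∈ Ioo (0:ℝ) 2)
    (μ : Measure (EuclideanSpace ℝ (Fin d))) [IsFiniteMeasure μ] (hμ : μ ≠ 0)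
    (S : Set (EuclideanSpace ℝ (Fin d))) (hScpt : IsCompact S)
    (hSsupp : IsSupportOf d μ S)
    (Cund : ℝ) (hCund : 0 < Cund) (hF2 : IsF2 d μ S Cund s) :
    ∃ c₁ > 0, ∀ k > (0:ℝ), ∀ t > (0:ℝ), ∀ x : EuclideanSpace ℝ (Fin d),
      Cund * c₁ * k * t ^ (-(1:ℝ)/β) * Wfn d α (t ^ (-(1:ℝ)/α) * infDist x S) ≤
        hfn d α β s μ k t x := by
  obtain ⟨-, hSμ, -⟩ := hSsupp
  have hSne : S.Nonempty := by
    by_contra! hS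
    rw [hS, compl_empty, Measure.measure_univ_eq_zero] at hSμ
    exact hμ hSμ
  refine ⟨(2 ^ ((d : ℝ) + α + 1))⁻¹, by positivity, fun k hk t ht x => ?_⟩
  set u := t ^ (1 / α)
  have hu : 0 < u := by positivity
  have hscale : t ^ (-(1:ℝ)/α) = u⁻¹ := by rw [neg_div, Real.rpow_neg ht.le]
  have hweight : t ^ (-s/α) = u ^ (-s) := by rw [← Real.rpow_mul ht.le]; ring_nf
  have hbound := hF2.mul_Wfn_mul_infDist_le_integral hCund.le hScpt hSne hSμ hα.1.le hu x
  rw [hfn_eq_mul_integral, hscale, hweight]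
  calc Cund * (2 ^ ((d : ℝ) + α + 1))⁻¹ * k * t ^ (-(1:ℝ)/β) * Wfn d α (u⁻¹ * infDist x S)
      = k * t ^ (-(1:ℝ)/β) * (2 ^ ((d : ℝ) + α + 1))⁻¹ *
          (Cund * Wfn d α (u⁻¹ * infDist x S)) := by ring
    _ ≤ k * t ^ (-(1:ℝ)/β) * (2 ^ ((d : ℝ) + α + 1))⁻¹ * (2 ^ ((d : ℝ) + α + 1) *
          ((1 + u ^ (-s)) * ∫ y, Wfn d α (u⁻¹ * dist x y) ∂μ)) := by gcongr
    _ = _ := by field_simp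

/-- Global lower bound on `h_k`:
`h_k(t,x) ≥ C̲ c₁ k t^{-1/β} W(t^{-1/α} d(x,S))` for an (F2)-s measure with compact support. -/
theorem stmt_4 (d : ℕ) (hd : 0 < d) (α β s : ℝ) (hα : α ∈ Ioo (0:ℝ) 2)
    (hβ : 0 < β) (hs : s ∈ Icc (0:ℝ) (d:ℝ))
    (μ : Measure (EuclideanSpace ℝ (Fin d))) [IsFiniteMeasure μ] (hμ : μ ≠ 0)
    (S : Set (EuclideanSpace ℝ (Fin d))) (hScpt : IsCompact S)
    (hSsupp : IsSupportOf d μ S)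
    (Cund : ℝ) (hCund : 0 < Cund) (hF2 : IsF2 d μ S Cund s) :
    ∃ c₁ > 0, ∀ k > (0:ℝ), ∀ t > (0:ℝ), ∀ x : EuclideanSpace ℝ (Fin d),
      Cund * c₁ * k * t ^ (-(1:ℝ)/β) * Wfn d α (t ^ (-(1:ℝ)/α) * infDist x S) ≤
        hfn d α β s μ k t x :=
  stmt_4_general d α β s hα μ hμ S hScpt hSsupp Cund hCund hF2
end
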